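/- For every integer alpha_1 and every gamma_1 in k_v there exists a subset T of k_v with at most q^r elements such that: for every nonzero x in L with Exc(x) false, v(phi(x)) = alpha_1 and ac(phi(x)) = gamma_1, one has ac(x) in T. (Lemma 2.10 of the paper: given the valuation and angular component of phi(x), there are at most q^r possible values for the angular component of x.) -/

import Mathlib

/-!
Write `β = v x`. The term `a i * x ^ q ^ i` has valuation `v(a i) + q^i β`, and the terms of
minimal valuation are those indexed by `J(β)`; their angular components add up to the value at
`ac x` of the residual polynomial `∑_{i ∈ J(β)} ac(a i) X^(q^i)`. If that value were `0`, then
`ac x` would be a nonzero root of it and `J(β)` would contain two indices, forcing `β ∈ P_v`: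
`x` would be exceptional. So for non-exceptional `x` there is no cancellation, `v(φ x)` is the
minimal term valuation and `ac(φ x)` is the residual polynomial evaluated at `ac x`. The minimal
term valuation is strictly increasing in `β`, so `α₁` determines `β`, and then `ac x` is a root of
the residual polynomial minus `γ₁`, a nonzero polynomial of degree at most `q^r`.
-/

open Filter Topology Finset

universe u

section Drinfeld

variable {L : Type u} [Field L] {k : Type*} [Field k]

/-- The integer value of the valuation `v` at `y` (junk value `0` at `y = 0`). -/
noncomputable def vz (v : L → WithTop ℤ) (y : L) : ℤ := (v y).untopD 0

/-- `v : L → ℤ ∪ {∞}` is a normalized discrete valuation: `v 0 = ∞`, `v` is finite and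
surjective onto `ℤ` on nonzero elements, `v (x * y) = v x + v y` and
`v (x + y) ≥ min (v x) (v y)`. -/
structure IsDVal (v : L → WithTop ℤ) : Prop where
  map_zero : v 0 = ⊤
  ne_top : ∀ x : L, x ≠ 0 → v x ≠ ⊤
  map_mul : ∀ x y : L, v (x * y) = v x + v y
  add_min : ∀ x y : L, min (v x) (v y) ≤ v (x + y)
  surj : ∀ n : ℤ, ∃ x : L, v x = (n : WithTop ℤ)

/-- `res : L → k` restricted to the valuation ring of `v` is the quotient map onto the
residue field `k` of `v`. -/
structure IsResidue (v : L → WithTop ℤ) (res : L → k) : Prop where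
  map_one : res 1 = 1
  map_add : ∀ x y : L, 0 ≤ v x → 0 ≤ v y → res (x + y) = res x + res y
  map_mul : ∀ x y : L, 0 ≤ v x → 0 ≤ v y → res (x * y) = res x * res y
  eq_zero_iff : ∀ x : L, 0 ≤ v x → (res x = 0 ↔ 0 < v x)
  surj : ∀ c : k, ∃ x : L, 0 ≤ v x ∧ res x = c

/-- The angular component of `y` at `v`, with respect to the uniformizer `π` and the
residue map `res`: the residue of `y * π ^ (-v y)`. -/
noncomputable def ac (v : L → WithTop ℤ) (π : L) (res : L → k) (y : L) : k :=
  res (y * π ^ (-(vz v y)))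

/-- The `F_q`-linear map `φ(x) = ∑_{i=r₀}^{r} a i * x^(q^i)`. -/
noncomputable def phiMap (q r₀ r : ℕ) (a : ℕ → L) (x : L) : L :=
  ∑ i ∈ Finset.Icc r₀ r, a i * x ^ q ^ i

/-- The set `P_v ⊆ ℚ` of possible exceptional valuations:
`(v(a i) - v(a j))/(q^j - q^i)` for `r₀ ≤ i < j ≤ r` with `a i ≠ 0 ≠ a j`, together with `0`. -/
def Pset (q : ℕ) (v : L → WithTop ℤ) (r₀ r : ℕ) (a : ℕ → L) : Set ℚ :=
  {0} ∪ {α : ℚ | ∃ i j : ℕ, r₀ ≤ i ∧ i < j ∧ j ≤ r ∧ a i ≠ 0 ∧ a j ≠ 0 ∧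
      α = ((vz v (a i) : ℚ) - (vz v (a j) : ℚ)) / ((q : ℚ) ^ j - (q : ℚ) ^ i)}

/-- The set `J(α)` of indices where `v(a i) + q^i * α` attains its minimum. -/
def Jset (q : ℕ) (v : L → WithTop ℤ) (r₀ r : ℕ) (a : ℕ → L) (α : ℚ) : Set ℕ :=
  {i : ℕ | r₀ ≤ i ∧ i ≤ r ∧ a i ≠ 0 ∧
    ∀ j : ℕ, r₀ ≤ j → j ≤ r → a j ≠ 0 →
      (vz v (a i) : ℚ) + (q : ℚ) ^ i * α ≤ (vz v (a j) : ℚ) + (q : ℚ) ^ j * α}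

open scoped Classical in
/-- The set `R_v(α) ⊆ k_v`: `1` together with the nonzero roots of
`∑_{i ∈ J(α)} ac(a i) * X^(q^i)`. -/
noncomputable def Rset (q : ℕ) (v : L → WithTop ℤ) (π : L) (res : L → k)
    (r₀ r : ℕ) (a : ℕ → L) (α : ℚ) : Set k :=
  {1} ∪ {γ : k | γ ≠ 0 ∧
    ∑ i ∈ Finset.Icc r₀ r,
      (if i ∈ Jset q v r₀ r a α then ac v π res (a i) * γ ^ q ^ i else 0) = 0}

/-- The exceptional condition `Exc(y)`: `v y ∈ P_v` and `ac y ∈ R_v(v y)`. -/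
def Exc (q : ℕ) (v : L → WithTop ℤ) (π : L) (res : L → k)
    (r₀ r : ℕ) (a : ℕ → L) (y : L) : Prop :=
  ((vz v y : ℚ) ∈ Pset q v r₀ r a) ∧ ac v π res y ∈ Rset q v π res r₀ r a ((vz v y : ℚ))

/-- The sequence `min(0, v(φⁿ x)) / q^(r n)` whose limit is minus the local height of `x`. -/
noncomputable def locSeq (q r : ℕ) (v : L → WithTop ℤ) (φ : L → L) (x : L) (n : ℕ) : ℝ :=
  ((min 0 (vz v (φ^[n] x)) : ℤ) : ℝ) / (q : ℝ) ^ (r * n)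

open Polynomial

omit [Field L] in
theorem vz_eq_of_map_eq {v : L → WithTop ℤ} {y : L} {n : ℤ} (h : v y = n) : vz v y = n := by
  simp [vz, h]

namespace IsDVal

variable {v : L → WithTop ℤ} (hv : IsDVal v)
include hv

theorem coe_vz {x : L} (hx : x ≠ 0) : (vz v x : WithTop ℤ) = v x := by
  lift v x to ℤ using hv.ne_top x hx with m hm
  exact congrArg _ (vz_eq_of_map_eq hm.symm)

theorem map_one : v 1 = 0 := by
  have h := hv.map_mul 1 1
  rw [mul_one] at h
  lift v 1 to ℤ using hv.ne_top 1 one_ne_zero with m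
  norm_cast at h ⊢
  omega

theorem map_pow (x : L) (n : ℕ) : v (x ^ n) = n • v x := by
  induction n with
  | zero => simp [hv.map_one]
  | succ n ih => rw [pow_succ, hv.map_mul, ih, succ_nsmul]

theorem map_inv {x : L} (hx : x ≠ 0) : v x⁻¹ = ((-vz v x : ℤ) : WithTop ℤ) := by
  have h := hv.map_mul x⁻¹ x
  rw [inv_mul_cancel₀ hx, hv.map_one, ← hv.coe_vz hx] at h
  lift v x⁻¹ to ℤ using hv.ne_top _ (inv_ne_zero hx) with n
  norm_cast at h ⊢
  omega

theorem map_zpow_of_eq_one {π : L} (hπ : v π = 1) (n : ℤ) : v (π ^ n) = n := by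
  have hpow (m : ℕ) : v (π ^ m) = m := by rw [hv.map_pow, hπ, nsmul_one]
  obtain ⟨m, rfl | rfl⟩ := n.eq_nat_or_neg
  · rw [zpow_natCast, hpow]; rfl
  · have hπ0 : π ≠ 0 := by rintro rfl; simp [hv.map_zero] at hπ
    rw [zpow_neg, zpow_natCast, hv.map_inv (pow_ne_zero m hπ0), vz_eq_of_map_eq (hpow m)]

theorem vz_mul {x y : L} (hx : x ≠ 0) (hy : y ≠ 0) : vz v (x * y) = vz v x + vz v y :=
  vz_eq_of_map_eq (by rw [hv.map_mul, ← hv.coe_vz hx, ← hv.coe_vz hy, WithTop.coe_add])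

theorem map_mul_pow {y x : L} (hy : y ≠ 0) (hx : x ≠ 0) (n : ℕ) :
    v (y * x ^ n) = ((vz v y + n * vz v x : ℤ) : WithTop ℤ) := by
  rw [hv.map_mul, hv.map_pow, ← hv.coe_vz hy, ← hv.coe_vz hx]
  norm_cast

theorem le_map_sum {ι : Type*} (s : Finset ι) (f : ι → L) {m : WithTop ℤ}
    (h : ∀ i ∈ s, m ≤ v (f i)) : m ≤ v (∑ i ∈ s, f i) := by
  classical
  induction s using Finset.induction_on with
  | empty => simp [hv.map_zero]
  | insert j s hj ih =>
    rw [sum_insert hj]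
    exact (le_min (h j (mem_insert_self j s))
      (ih fun i hi => h i (mem_insert_of_mem hi))).trans (hv.add_min _ _)

end IsDVal

namespace IsResidue

variable {v : L → WithTop ℤ} {res : L → k} (hres : IsResidue v res)
include hres

theorem map_zero (hv : IsDVal v) : res 0 = 0 := by
  rw [hres.eq_zero_iff 0 (by simp [hv.map_zero]), hv.map_zero]
  exact WithTop.coe_lt_top 0

theorem map_sum (hv : IsDVal v) {ι : Type*} (s : Finset ι) (f : ι → L)
    (h : ∀ i ∈ s, 0 ≤ v (f i)) : res (∑ i ∈ s, f i) = ∑ i ∈ s, res (f i) := by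
  classical
  induction s using Finset.induction_on with
  | empty => simpa using hres.map_zero hv
  | insert j s hj ih =>
    have hs : ∀ i ∈ s, 0 ≤ v (f i) := fun i hi => h i (mem_insert_of_mem hi)
    rw [sum_insert hj, sum_insert hj, hres.map_add _ _ (h j (mem_insert_self j s))
      (hv.le_map_sum s f hs), ih hs]

end IsResidue

section AngularComponent

variable {v : L → WithTop ℤ} (hv : IsDVal v) {π : L} (hπ : v π = 1)
include hv hπ

theorem map_mul_zpow (y : L) (n : ℤ) : v (y * π ^ n) = v y + n := by
  rw [hv.map_mul, hv.map_zpow_of_eq_one hπ]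

theorem nonneg_map_mul_zpow_neg {y : L} {m : ℤ} (hm : (m : WithTop ℤ) ≤ v y) :
    0 ≤ v (y * π ^ (-m)) := by
  rw [map_mul_zpow hv hπ]
  generalize v y = w at hm
  induction w using WithTop.recTopCoe with
  | top => exact le_top
  | coe n => norm_cast at hm ⊢; omega

variable {res : L → k} (hres : IsResidue v res)
include hres

theorem res_mul_zpow_neg {y : L} {m : ℤ} (hm : (m : WithTop ℤ) ≤ v y) :
    res (y * π ^ (-m)) = if v y = m then ac v π res y else 0 := by
  split_ifs with h
  · rw [ac, vz_eq_of_map_eq h]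
  · have hpos : 0 < v (y * π ^ (-m)) := by
      rw [map_mul_zpow hv hπ]
      generalize v y = w at hm h
      induction w using WithTop.recTopCoe with
      | top => exact WithTop.coe_lt_top 0
      | coe n => norm_cast at hm h ⊢; omega
    exact (hres.eq_zero_iff _ hpos.le).mpr hpos

theorem ac_ne_zero {y : L} (hy : y ≠ 0) : ac v π res y ≠ 0 := by
  have h := res_mul_zpow_neg hv hπ hres (hv.coe_vz hy).le
  rw [if_pos (hv.coe_vz hy).symm] at h
  rw [← h, Ne, hres.eq_zero_iff _ (nonneg_map_mul_zpow_neg hv hπ (hv.coe_vz hy).le),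
    map_mul_zpow hv hπ, ← hv.coe_vz hy, ← WithTop.coe_add, add_neg_cancel]
  exact lt_irrefl 0

theorem ac_mul {y z : L} (hy : y ≠ 0) (hz : z ≠ 0) :
    ac v π res (y * z) = ac v π res y * ac v π res z := by
  have hπ0 : π ≠ 0 := by rintro rfl; simp [hv.map_zero] at hπ
  rw [ac, ac, ac, ← hres.map_mul _ _ (nonneg_map_mul_zpow_neg hv hπ (hv.coe_vz hy).le)
    (nonneg_map_mul_zpow_neg hv hπ (hv.coe_vz hz).le), hv.vz_mul hy hz, neg_add,
    zpow_add₀ hπ0]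
  ring_nf

theorem ac_pow {y : L} (hy : y ≠ 0) (n : ℕ) : ac v π res (y ^ n) = ac v π res y ^ n := by
  induction n with
  | zero => simp [ac, vz_eq_of_map_eq (n := 0) hv.map_one, hres.map_one]
  | succ n ih => rw [pow_succ, pow_succ, ac_mul hv hπ hres (pow_ne_zero n hy) hy, ih]

/-- The residue of `(∑ i ∈ s, f i) * π ^ (-m)` only sees the terms of valuation exactly `m`. -/
theorem map_sum_eq_and_ac_sum_eq {ι : Type*} (s : Finset ι) (f : ι → L) {m : ℤ}
    (hm : ∀ i ∈ s, (m : WithTop ℤ) ≤ v (f i))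
    (hc : ∑ i ∈ s, (if v (f i) = m then ac v π res (f i) else 0) ≠ 0) :
    v (∑ i ∈ s, f i) = m ∧
      ac v π res (∑ i ∈ s, f i) = ∑ i ∈ s, (if v (f i) = m then ac v π res (f i) else 0) := by
  have h := res_mul_zpow_neg hv hπ hres (hv.le_map_sum s f hm)
  rw [sum_mul, hres.map_sum hv _ _ fun i hi => nonneg_map_mul_zpow_neg hv hπ (hm i hi),
    sum_congr rfl fun i hi => res_mul_zpow_neg hv hπ hres (hm i hi)] at h
  split_ifs at h with hsum
  · exact ⟨hsum, h.symm⟩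
  · exact absurd h hc

end AngularComponent

section NewtonPolygon

variable (q : ℕ) (v : L → WithTop ℤ) (r₀ r : ℕ) (a : ℕ → L)

/-- The valuation of `a i * x ^ q ^ i` when `v x = α` and `a i ≠ 0`. -/
noncomputable def termVal (i : ℕ) (α : ℚ) : ℚ := vz v (a i) + (q : ℚ) ^ i * α

variable {q v r₀ r a}

theorem mem_Icc_of_mem_Jset {i : ℕ} {α : ℚ} (hi : i ∈ Jset q v r₀ r a α) : i ∈ Icc r₀ r :=
  mem_Icc.2 ⟨hi.1, hi.2.1⟩

theorem termVal_le_of_mem_Jset {i j : ℕ} {α : ℚ} (hi : i ∈ Jset q v r₀ r a α)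
    (hj : j ∈ Icc r₀ r) (haj : a j ≠ 0) : termVal q v a i α ≤ termVal q v a j α :=
  hi.2.2.2 j (mem_Icc.1 hj).1 (mem_Icc.1 hj).2 haj

theorem mem_Jset_iff_termVal_eq {i₀ i : ℕ} {α : ℚ} (hi₀ : i₀ ∈ Jset q v r₀ r a α)
    (hi : i ∈ Icc r₀ r) (hai : a i ≠ 0) :
    i ∈ Jset q v r₀ r a α ↔ termVal q v a i α = termVal q v a i₀ α := by
  refine ⟨fun h => le_antisymm (termVal_le_of_mem_Jset h (mem_Icc_of_mem_Jset hi₀) hi₀.2.2.1)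
    (termVal_le_of_mem_Jset hi₀ hi hai), fun h => ?_⟩
  refine ⟨(mem_Icc.1 hi).1, (mem_Icc.1 hi).2, hai, fun j hj₀ hjr haj => ?_⟩
  change termVal q v a i α ≤ termVal q v a j α
  exact h ▸ termVal_le_of_mem_Jset hi₀ (mem_Icc.2 ⟨hj₀, hjr⟩) haj

theorem exists_mem_Jset {i : ℕ} (hi : i ∈ Icc r₀ r) (hai : a i ≠ 0) (α : ℚ) :
    ∃ j, j ∈ Jset q v r₀ r a α := by
  classical
  obtain ⟨j, hj, hmin⟩ := ((Icc r₀ r).filter (a · ≠ 0)).exists_min_image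
    (termVal q v a · α) ⟨i, mem_filter.2 ⟨hi, hai⟩⟩
  rw [mem_filter, mem_Icc] at hj
  exact ⟨j, hj.1.1, hj.1.2, hj.2, fun j' hj₀ hjr haj => hmin j' (by simp [*])⟩

theorem mem_Pset_of_mem_Jset (hq : 1 < q) {i j : ℕ} {α : ℚ} (hi : i ∈ Jset q v r₀ r a α)
    (hj : j ∈ Jset q v r₀ r a α) (hij : i ≠ j) : α ∈ Pset q v r₀ r a := by
  wlog hlt : i < j generalizing i j
  · exact this hj hi hij.symm (hij.symm.lt_of_le (not_lt.1 hlt))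
  have heq : termVal q v a j α = termVal q v a i α :=
    (mem_Jset_iff_termVal_eq hi (mem_Icc_of_mem_Jset hj) hj.2.2.1).1 hj
  have hpow : (q : ℚ) ^ i < (q : ℚ) ^ j := pow_lt_pow_right₀ (by exact_mod_cast hq) hlt
  refine Set.mem_union_right _ ⟨i, j, hi.1, hlt, hj.2.1, hi.2.2.1, hj.2.2.1, ?_⟩
  rw [eq_div_iff (sub_ne_zero.2 hpow.ne')]
  rw [termVal, termVal] at heq
  linarith

theorem termVal_lt_of_mem_Jset_of_lt (hq : 0 < q) {i j : ℕ} {α β : ℚ}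
    (hi : i ∈ Jset q v r₀ r a α) (hj : j ∈ Jset q v r₀ r a β) (hαβ : α < β) :
    termVal q v a i α < termVal q v a j β := by
  have hpow : (0 : ℚ) < (q : ℚ) ^ j := by positivity
  calc termVal q v a i α ≤ termVal q v a j α :=
        termVal_le_of_mem_Jset hi (mem_Icc_of_mem_Jset hj) hj.2.2.1
    _ < termVal q v a j β := by unfold termVal; gcongr

theorem eq_of_mem_Jset_of_termVal_eq (hq : 0 < q) {i j : ℕ} {α β : ℚ}
    (hi : i ∈ Jset q v r₀ r a α) (hj : j ∈ Jset q v r₀ r a β)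
    (h : termVal q v a i α = termVal q v a j β) : α = β := by
  rcases lt_trichotomy α β with hlt | heq | hgt
  · exact absurd h (termVal_lt_of_mem_Jset_of_lt hq hi hj hlt).ne
  · exact heq
  · exact absurd h (termVal_lt_of_mem_Jset_of_lt hq hj hi hgt).ne'

variable (q v r₀ r a) in
open scoped Classical in
/-- The polynomial whose nonzero roots, together with `1`, form `R_v(α)`. -/
noncomputable def residualPoly (π : L) (res : L → k) (α : ℚ) : k[X] :=
  ∑ i ∈ Icc r₀ r, if i ∈ Jset q v r₀ r a α then C (ac v π res (a i)) * X ^ q ^ i else 0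

variable {π : L} {res : L → k}

open scoped Classical in
theorem eval_residualPoly (α : ℚ) (γ : k) :
    (residualPoly q v r₀ r a π res α).eval γ = ∑ i ∈ Icc r₀ r,
      (if i ∈ Jset q v r₀ r a α then ac v π res (a i) * γ ^ q ^ i else 0) := by
  simp only [residualPoly, eval_finsetSum, apply_ite (eval γ), eval_mul, eval_C, eval_pow,
    eval_X, eval_zero]

theorem natDegree_residualPoly_le (hq : 0 < q) (α : ℚ) :
    (residualPoly q v r₀ r a π res α).natDegree ≤ q ^ r := by
  refine natDegree_sum_le_of_forall_le _ _ fun i hi => ?_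
  split_ifs
  · exact (natDegree_C_mul_X_pow_le _ _).trans (Nat.pow_le_pow_right hq (mem_Icc.1 hi).2)
  · simp

theorem card_roots_residualPoly_sub_C_le [DecidableEq k] (hq : 0 < q) (α : ℚ) (γ : k) :
    (residualPoly q v r₀ r a π res α - C γ).roots.toFinset.card ≤ q ^ r :=
  calc _ ≤ Multiset.card _ := Multiset.toFinset_card_le _
    _ ≤ _ := card_roots' _
    _ ≤ q ^ r := natDegree_sub_C.trans_le (natDegree_residualPoly_le hq α)

theorem coeff_residualPoly_of_mem_Jset (hq : 1 < q) {i : ℕ} {α : ℚ}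
    (hi : i ∈ Jset q v r₀ r a α) :
    (residualPoly q v r₀ r a π res α).coeff (q ^ i) = ac v π res (a i) := by
  rw [residualPoly, finsetSum_coeff, sum_eq_single_of_mem i (mem_Icc_of_mem_Jset hi)]
  · rw [if_pos hi, coeff_C_mul_X_pow, if_pos rfl]
  · intro j _ hji
    split_ifs
    · rw [coeff_C_mul_X_pow, if_neg fun h => hji (Nat.pow_right_injective hq h).symm]
    · exact coeff_zero _

variable (hv : IsDVal v) (hπ : v π = 1) (hres : IsResidue v res)
include hv hπ hres

theorem residualPoly_sub_C_ne_zero (hq : 1 < q) {i : ℕ} {α : ℚ} (hi : i ∈ Jset q v r₀ r a α)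
    (γ : k) : residualPoly q v r₀ r a π res α - C γ ≠ 0 := by
  intro h
  have hcoeff := congrArg (coeff · (q ^ i)) h
  simp only [coeff_sub, coeff_C, coeff_residualPoly_of_mem_Jset hq hi, coeff_zero,
    if_neg (pow_ne_zero i (by omega : q ≠ 0)), sub_zero] at hcoeff
  exact ac_ne_zero hv hπ hres hi.2.2.1 hcoeff

theorem exc_of_eval_residualPoly_eq_zero (hq : 1 < q) {x : L} (hx : x ≠ 0) {i₀ : ℕ}
    (hi₀ : i₀ ∈ Jset q v r₀ r a (vz v x))
    (h : (residualPoly q v r₀ r a π res (vz v x)).eval (ac v π res x) = 0) :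
    Exc q v π res r₀ r a x := by
  classical
  rw [eval_residualPoly] at h
  refine ⟨?_, Set.mem_union_right _ ⟨ac_ne_zero hv hπ hres hx, h⟩⟩
  obtain ⟨j, -, hji, hj⟩ : ∃ j ∈ Icc r₀ r, j ≠ i₀ ∧ (if j ∈ Jset q v r₀ r a (vz v x)
      then ac v π res (a j) * ac v π res x ^ q ^ j else 0) ≠ 0 := by
    by_contra! hothers
    rw [sum_eq_single_of_mem i₀ (mem_Icc_of_mem_Jset hi₀) hothers, if_pos hi₀] at h
    exact mul_ne_zero (ac_ne_zero hv hπ hres hi₀.2.2.1)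
      (pow_ne_zero _ (ac_ne_zero hv hπ hres hx)) h
  exact mem_Pset_of_mem_Jset hq hi₀ (of_not_not fun hn => hj (if_neg hn)) hji.symm

theorem map_phiMap_and_ac_phiMap (hq : 1 < q) {x : L} (hx : x ≠ 0)
    (hexc : ¬ Exc q v π res r₀ r a x) {i₀ : ℕ} (hi₀ : i₀ ∈ Jset q v r₀ r a (vz v x)) :
    v (phiMap q r₀ r a x) = ((vz v (a i₀) + (q ^ i₀ : ℕ) * vz v x : ℤ) : WithTop ℤ) ∧
      ac v π res (phiMap q r₀ r a x) =
        (residualPoly q v r₀ r a π res (vz v x)).eval (ac v π res x) := by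
  classical
  have hcast (i : ℕ) :
      ((vz v (a i) + (q ^ i : ℕ) * vz v x : ℤ) : ℚ) = termVal q v a i (vz v x) := by
    rw [termVal]; push_cast; rfl
  have hle : ∀ i ∈ Icc r₀ r,
      ((vz v (a i₀) + (q ^ i₀ : ℕ) * vz v x : ℤ) : WithTop ℤ) ≤ v (a i * x ^ q ^ i) := by
    intro i hi
    by_cases hai : a i = 0
    · simp [hai, hv.map_zero]
    rw [hv.map_mul_pow hai hx, WithTop.coe_le_coe, ← Int.cast_le (R := ℚ), hcast, hcast]
    exact termVal_le_of_mem_Jset hi₀ hi hai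
  have hdominant : ∀ i ∈ Icc r₀ r,
      (if v (a i * x ^ q ^ i) = ((vz v (a i₀) + (q ^ i₀ : ℕ) * vz v x : ℤ) : WithTop ℤ)
        then ac v π res (a i * x ^ q ^ i) else 0) =
        if i ∈ Jset q v r₀ r a (vz v x) then ac v π res (a i) * ac v π res x ^ q ^ i else 0 := by
    intro i hi
    by_cases hai : a i = 0
    · have hJ : i ∉ Jset q v r₀ r a (vz v x) := fun h => h.2.2.1 hai
      rw [if_neg hJ, hai, zero_mul, hv.map_zero, if_neg WithTop.top_ne_coe]
    rw [hv.map_mul_pow hai hx, ac_mul hv hπ hres hai (pow_ne_zero _ hx), ac_pow hv hπ hres hx]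
    refine if_congr ?_ rfl rfl
    rw [mem_Jset_iff_termVal_eq hi₀ hi hai, ← hcast, ← hcast, WithTop.coe_inj, Int.cast_inj]
  have hsum := (sum_congr rfl hdominant).trans (eval_residualPoly _ _).symm
  rw [← hsum]
  refine map_sum_eq_and_ac_sum_eq hv hπ hres _ _ hle fun h => hexc ?_
  exact exc_of_eval_residualPoly_eq_zero hv hπ hres hq hx hi₀ (hsum.symm.trans h)


theorem termVal_eq_of_map_phiMap_eq (hq : 1 < q) {x : L} (hx : x ≠ 0)
    (hexc : ¬ Exc q v π res r₀ r a x) {α : ℤ} (hφ : v (phiMap q r₀ r a x) = α) {i : ℕ}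
    (hi : i ∈ Jset q v r₀ r a (vz v x)) : termVal q v a i (vz v x) = α := by
  have h := hφ.symm.trans (map_phiMap_and_ac_phiMap hv hπ hres hq hx hexc hi).1
  rw [WithTop.coe_inj] at h
  rw [termVal, h]
  push_cast
  rfl

end NewtonPolygon

theorem statement6_general
    (p q : ℕ) (hp : p.Prime) (hq : ∃ s : ℕ, 0 < s ∧ q = p ^ s)
    (v : L → WithTop ℤ) (hv : IsDVal v)
    (π : L) (hπ : v π = 1) (res : L → k) (hres : IsResidue v res)
    (r₀ r : ℕ) (hr₀r : r₀ ≤ r)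
    (a : ℕ → L) (har₀ : a r₀ ≠ 0)
    (α₁ : ℤ) (γ₁ : k) :
    ∃ T : Finset k, T.card ≤ q ^ r ∧
      ∀ x : L, x ≠ 0 → ¬ Exc q v π res r₀ r a x →
        v (phiMap q r₀ r a x) = (α₁ : WithTop ℤ) →
        ac v π res (phiMap q r₀ r a x) = γ₁ →
        ac v π res x ∈ T := by
  classical
  have hq1 : 1 < q := by
    obtain ⟨s, hs, rfl⟩ := hq
    exact Nat.one_lt_pow hs.ne' hp.one_lt
  have hJ (α : ℚ) : ∃ i, i ∈ Jset q v r₀ r a α :=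
    exists_mem_Jset (mem_Icc.2 ⟨le_rfl, hr₀r⟩) har₀ α
  by_cases hx₀ : ∃ x₀, x₀ ≠ 0 ∧ ¬ Exc q v π res r₀ r a x₀ ∧ v (phiMap q r₀ r a x₀) = α₁
  · obtain ⟨x₀, hx₀, hexc₀, hφ₀⟩ := hx₀
    obtain ⟨i₀, hi₀⟩ := hJ (vz v x₀)
    refine ⟨(residualPoly q v r₀ r a π res (vz v x₀) - C γ₁).roots.toFinset,
      card_roots_residualPoly_sub_C_le (by omega) _ _, fun x hx hexc hφ hac => ?_⟩
    obtain ⟨i, hi⟩ := hJ (vz v x)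
    have hvz : (vz v x : ℚ) = vz v x₀ := eq_of_mem_Jset_of_termVal_eq (by omega) hi hi₀
      ((termVal_eq_of_map_phiMap_eq hv hπ hres hq1 hx hexc hφ hi).trans
        (termVal_eq_of_map_phiMap_eq hv hπ hres hq1 hx₀ hexc₀ hφ₀ hi₀).symm)
    rw [Multiset.mem_toFinset, mem_roots (residualPoly_sub_C_ne_zero hv hπ hres hq1 hi₀ γ₁),
      IsRoot, eval_sub, eval_C, ← hvz, ← (map_phiMap_and_ac_phiMap hv hπ hres hq1 hx hexc hi).2,
      hac, sub_self]
  · refine ⟨∅, by simp, fun x hx hexc hφ _ => (hx₀ ⟨x, hx, hexc, hφ⟩).elim⟩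

/-- Lemma 2.10: given the valuation `α₁` and the angular component `γ₁` of `φ(x)`, the
angular component of a non-exceptional `x` lies in a set of at most `q^r` elements. -/
theorem statement6
    (p q : ℕ) (hp : p.Prime) (hq : ∃ s : ℕ, 0 < s ∧ q = p ^ s)
    [CharP L p] (F : Subfield L) (hF : Nat.card F = q)
    (v : L → WithTop ℤ) (hv : IsDVal v)
    (π : L) (hπ : v π = 1) (res : L → k) (hres : IsResidue v res)
    (r₀ r : ℕ) (hr1 : 1 ≤ r) (hr₀r : r₀ ≤ r)
    (a : ℕ → L) (har₀ : a r₀ ≠ 0) (har : a r = 1)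
    (α₁ : ℤ) (γ₁ : k) :
    ∃ T : Finset k, T.card ≤ q ^ r ∧
      ∀ x : L, x ≠ 0 → ¬ Exc q v π res r₀ r a x →
        v (phiMap q r₀ r a x) = (α₁ : WithTop ℤ) →
        ac v π res (phiMap q r₀ r a x) = γ₁ →
        ac v π res x ∈ T :=
  statement6_general p q hp hq v hv π hπ res hres r₀ r hr₀r a har₀ α₁ γ₁

end Drinfeld
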